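/- Let $a<b$, $\alpha\in[0,1]$, $x\in[a,\frac{a+b}{2}]$, and let $f,u:[a,b]\to\mathbb{R}$ be such that the Riemann–Stieltjes integrals $\int_a^b S_u(t;x)\,df(t)$ and $\int_a^b f(t)\,du(t)$ exist, where $S_u(t;x) = (1-\alpha)[u(t)-u(a)]+\alpha[u(t)-u(x)]$ for $t\in[a,x]$, $S_u(t;x) = (1-\alpha)[u(t)-u(\frac{a+b}{2})]+\alpha[u(t)-u(x)]$ for $t\in(x,a+b-x]$, and $S_u(t;x) = (1-\alpha)[u(t)-u(b)]+\alpha[u(t)-u(x)]$ for $t\in(a+b-x,b]$. Then $\int_a^b S_u(t;x)\,df(t) = \Phi_\alpha(f,u;x) - \int_a^b f(t)\,du(t)$. -/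
import Mathlib


open MeasureTheory Set Real

/-- A tagged partition of the interval `[a, b]`. -/
structure TaggedPartition (a b : ℝ) where
  n : ℕ
  hn : 0 < n
  t : ℕ → ℝ
  tag : ℕ → ℝ
  left : t 0 = a
  right : t n = b
  mono : ∀ i < n, t i ≤ t (i + 1)
  tagMem : ∀ i < n, tag i ∈ Set.Icc (t i) (t (i + 1))

/-- The Riemann–Stieltjes sum of `f` with respect to `ν` over a tagged partition. -/
noncomputable def RSSum {a b : ℝ} (f ν : ℝ → ℝ) (P : TaggedPartition a b) : ℝ :=
  ∑ i ∈ Finset.range P.n, f (P.tag i) * (ν (P.t (i + 1)) - ν (P.t i))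

/-- `f` is Riemann–Stieltjes integrable with respect to `ν` on `[a,b]` with value `I`:
the RS sums converge to `I` as the mesh tends to zero. -/
def HasRSIntegral (f ν : ℝ → ℝ) (a b I : ℝ) : Prop :=
  ∀ ε > 0, ∃ δ > 0, ∀ P : TaggedPartition a b,
    (∀ i < P.n, P.t (i + 1) - P.t i < δ) → |RSSum f ν P - I| < ε

/-- The Lipschitz "seminorm" `sup_{x ≠ y ∈ [a,b]} |(f y - f x)/(y - x)|`. -/
noncomputable def lipC (f : ℝ → ℝ) (a b : ℝ) : ℝ :=
  sSup {L : ℝ | ∃ x ∈ Set.Icc a b, ∃ y ∈ Set.Icc a b, x ≠ y ∧ L = |(f y - f x) / (y - x)|}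

/-- The total variation of `f` on `[a,b]`. -/
noncomputable def totalVar (f : ℝ → ℝ) (a b : ℝ) : ℝ :=
  (eVariationOn f (Set.Icc a b)).toReal

/-- The general two/three point quadrature formula `Φ_α(f,u;x)`. -/
noncomputable def Phi (f u : ℝ → ℝ) (α a b x : ℝ) : ℝ :=
  (1 - α) * ((u ((a + b) / 2) - u a) * f x + (u b - u ((a + b) / 2)) * f (a + b - x))
    + α * ((u x - u a) * f a + (u b - u x) * f b)

/-- `g` is absolutely continuous on `[c,d]`. -/
def AbsContOnIcc (g : ℝ → ℝ) (c d : ℝ) : Prop :=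
  ∀ ε > 0, ∃ δ > 0, ∀ m : ℕ, ∀ s t : ℕ → ℝ,
    (∀ i < m, c ≤ s i ∧ s i ≤ t i ∧ t i ≤ d) →
    (∀ i < m, ∀ j < m, i ≠ j → Disjoint (Set.Ioo (s i) (t i)) (Set.Ioo (s j) (t j))) →
    (∑ i ∈ Finset.range m, (t i - s i)) < δ →
    (∑ i ∈ Finset.range m, |g (t i) - g (s i)|) < ε

/-- The class `𝔘^p(I)`: positive `n`-times differentiable functions on the interior of `I`
whose `n`-th derivative is positive and locally absolutely continuous on the interior of `I`,
with `∫_a^b (h^{(n)})^p < ∞`. -/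
structure MemU (p : ℝ) (n : ℕ) (I : Set ℝ) (a b : ℝ) (h : ℝ → ℝ) : Prop where
  pos : ∀ x ∈ interior I, 0 < h x
  diff : ∀ k < n, DifferentiableOn ℝ (iteratedDeriv k h) (interior I)
  derivPos : ∀ x ∈ interior I, 0 < iteratedDeriv n h x
  locAC : ∀ c d : ℝ, c ≤ d → Set.Icc c d ⊆ interior I →
    AbsContOnIcc (iteratedDeriv n h) c d
  integ : IntervalIntegrable (fun t => iteratedDeriv n h t ^ p) MeasureTheory.volume a b

lemma rs_tele (n : ℕ) (F G U : ℕ → ℝ) (h : ∀ j, 1 ≤ j → j ≤ n → G j = U (j - 1)) :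
    (∑ i ∈ Finset.range n, U i * (F (i + 1) - F i))
      + (∑ j ∈ Finset.range (n + 1), F j * (G (j + 1) - G j))
      = G (n + 1) * F n - G 0 * F 0 := by
  induction n with
  | zero => simp [Finset.sum_range_one]; ring
  | succ n ih =>
    have hG : G (n + 1) = U n := by
      have := h (n + 1) (by omega) le_rfl
      simpa using this
    rw [Finset.sum_range_succ (f := fun i => U i * (F (i + 1) - F i)),
      Finset.sum_range_succ (f := fun j => F j * (G (j + 1) - G j))]
    have ih' := ih (fun j h1 h2 => h j h1 (by omega))
    linear_combination ih' + (F n - F (n + 1)) * hG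

lemma rs_block (m k : ℕ) (c : ℝ) (w F : ℕ → ℝ) (hmk : m ≤ k)
    (hw : ∀ i, m ≤ i → i < k → w i * (F (i + 1) - F i) = c * (F (i + 1) - F i)) :
    ∑ i ∈ Finset.Ico m k, w i * (F (i + 1) - F i) = c * (F k - F m) := by
  have h1 : ∑ i ∈ Finset.Ico m k, w i * (F (i + 1) - F i)
      = ∑ i ∈ Finset.Ico m k, c * (F (i + 1) - F i) :=
    Finset.sum_congr rfl (fun i hi => by
      obtain ⟨ha, hb⟩ := Finset.mem_Ico.mp hi; exact hw i ha hb)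
  rw [h1, ← Finset.mul_sum]
  congr 1
  rw [Finset.sum_Ico_eq_sub _ hmk, Finset.sum_range_sub, Finset.sum_range_sub]
  ring

lemma RSSum_mk {a b : ℝ} (f ν : ℝ → ℝ) (n : ℕ) (hn : 0 < n) (t tag : ℕ → ℝ)
    (left : t 0 = a) (right : t n = b) (mono : ∀ i < n, t i ≤ t (i + 1))
    (tagMem : ∀ i < n, tag i ∈ Set.Icc (t i) (t (i + 1))) :
    RSSum f ν (⟨n, hn, t, tag, left, right, mono, tagMem⟩ : TaggedPartition a b)
      = ∑ i ∈ Finset.range n, f (tag i) * (ν (t (i + 1)) - ν (t i)) := rfl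


set_option maxHeartbeats 2000000 in
/-- The identity `∫_a^b S_u(t;x) df(t) = Φ_α(f,u;x) - ∫_a^b f du`,
where `S_u(·;x)` is the piecewise kernel associated with the general quadrature rule. -/
theorem rs_kernel_identity (a b α x J₁ J₂ : ℝ) (hab : a < b) (hα : α ∈ Set.Icc (0 : ℝ) 1)
    (hx : x ∈ Set.Icc a ((a + b) / 2)) (f u : ℝ → ℝ)
    (hS : HasRSIntegral (fun t =>
        if t ≤ x then (1 - α) * (u t - u a) + α * (u t - u x)
        else if t ≤ a + b - x then (1 - α) * (u t - u ((a + b) / 2)) + α * (u t - u x)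
        else (1 - α) * (u t - u b) + α * (u t - u x)) f a b J₁)
    (hf : HasRSIntegral f u a b J₂) :
    J₁ = Phi f u α a b x - J₂ := by
  have hax : a ≤ x := hx.1
  have hx2 : x ≤ (a + b) / 2 := hx.2
  set M' : ℝ := a + b - x with hM'def
  have hxM' : x ≤ M' := by rw [hM'def]; linarith
  have hM'b : M' ≤ b := by rw [hM'def]; linarith
  have key : ∀ ε : ℝ, 0 < ε → |J₁ - (Phi f u α a b x - J₂)| < ε := by
    intro ε hε
    obtain ⟨δ₁, hδ₁, H₁⟩ := hS (ε / 2) (by linarith)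
    obtain ⟨δ₂, hδ₂, H₂⟩ := hf (ε / 2) (by linarith)
    set δ : ℝ := min δ₁ δ₂ with hδdef
    have hδ : 0 < δ := lt_min hδ₁ hδ₂
    obtain ⟨N, hNgt⟩ := exists_nat_gt (2 * (b - a) / δ)
    have hposr : (0 : ℝ) < 2 * (b - a) / δ := div_pos (by linarith) hδ
    have hNR : (0 : ℝ) < (N : ℝ) := lt_trans hposr hNgt
    have hN0 : 0 < N := by exact_mod_cast hNR
    have hNne : (N : ℝ) ≠ 0 := hNR.ne'
    have hmesh : (b - a) / N < δ / 2 := by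
      rw [div_lt_iff₀ hNR]
      have h2 := (div_lt_iff₀ hδ).mp hNgt
      nlinarith
    set d1 : ℝ := (x - a) / N with hd1def
    set d2 : ℝ := (M' - x) / N with hd2def
    set d3 : ℝ := (b - M') / N with hd3def
    have hd1 : 0 ≤ d1 := div_nonneg (by linarith) hNR.le
    have hd2 : 0 ≤ d2 := div_nonneg (by linarith) hNR.le
    have hd3 : 0 ≤ d3 := div_nonneg (by linarith) hNR.le
    have hNd1 : (N : ℝ) * d1 = x - a := by rw [hd1def]; field_simp
    have hNd2 : (N : ℝ) * d2 = M' - x := by rw [hd2def]; field_simp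
    have hNd3 : (N : ℝ) * d3 = b - M' := by rw [hd3def]; field_simp
    have hdsum : d1 + d2 + d3 = (b - a) / N := by
      rw [hd1def, hd2def, hd3def, hM'def]; ring
    set T : ℕ → ℝ := fun i =>
      a + ((min i N : ℕ) : ℝ) * d1 + ((min (i - N) N : ℕ) : ℝ) * d2
        + ((min (i - 2 * N) N : ℕ) : ℝ) * d3 with hT
    have hT0 : T 0 = a := by simp [hT]
    have hTlow : ∀ i, i ≤ N → T i = a + (i : ℝ) * d1 := by
      intro i hi
      have h1 : min i N = i := min_eq_left hi
      have h2 : i - N = 0 := by omega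
      have h3 : i - 2 * N = 0 := by omega
      simp [hT, h1, h2, h3]
      exact Or.inl hi
    have hTN : T N = x := by
      rw [hTlow N le_rfl]; linarith [hNd1]
    have hTmid : ∀ i, N ≤ i → i ≤ 2 * N → T i = x + ((i - N : ℕ) : ℝ) * d2 := by
      intro i h1 h2
      have e1 : min i N = N := min_eq_right h1
      have e2 : min (i - N) N = i - N := min_eq_left (by omega)
      have e3 : i - 2 * N = 0 := by omega
      simp only [hT, e1, e2, e3]
      simp only [Nat.min_def]
      norm_num
      linarith [hNd1]
    have hT2N : T (2 * N) = M' := by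
      rw [hTmid (2 * N) (by omega) le_rfl]
      have : (2 * N - N) = N := by omega
      rw [this]; linarith [hNd2]
    have hThigh : ∀ i, 2 * N ≤ i → i ≤ 3 * N → T i = M' + ((i - 2 * N : ℕ) : ℝ) * d3 := by
      intro i h1 h2
      have e1 : min i N = N := min_eq_right (by omega)
      have e2 : min (i - N) N = N := min_eq_right (by omega)
      have e3 : min (i - 2 * N) N = i - 2 * N := min_eq_left (by omega)
      simp only [hT, e1, e2, e3]
      linarith [hNd1, hNd2]
    have hT3N : T (3 * N) = b := by
      rw [hThigh (3 * N) (by omega) le_rfl]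
      have : (3 * N - 2 * N) = N := by omega
      rw [this]; linarith [hNd3]
    have hstep : ∀ i : ℕ, 0 ≤ T (i + 1) - T i ∧ T (i + 1) - T i ≤ (b - a) / N := by
      intro i
      have e : T (i + 1) - T i =
          (((min (i + 1) N : ℕ) : ℝ) - ((min i N : ℕ) : ℝ)) * d1
          + (((min (i + 1 - N) N : ℕ) : ℝ) - ((min (i - N) N : ℕ) : ℝ)) * d2
          + (((min (i + 1 - 2 * N) N : ℕ) : ℝ) - ((min (i - 2 * N) N : ℕ) : ℝ)) * d3 := by
        simp only [hT]; ring
      have b1 : min i N ≤ min (i + 1) N ∧ min (i + 1) N ≤ min i N + 1 := by omega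
      have b2 : min (i - N) N ≤ min (i + 1 - N) N ∧ min (i + 1 - N) N ≤ min (i - N) N + 1 := by
        omega
      have b3 : min (i - 2 * N) N ≤ min (i + 1 - 2 * N) N ∧
          min (i + 1 - 2 * N) N ≤ min (i - 2 * N) N + 1 := by omega
      have r1a : ((min i N : ℕ) : ℝ) ≤ ((min (i + 1) N : ℕ) : ℝ) := Nat.cast_le.mpr b1.1
      have r1b : ((min (i + 1) N : ℕ) : ℝ) ≤ ((min i N : ℕ) : ℝ) + 1 := by exact_mod_cast b1.2
      have r2a : ((min (i - N) N : ℕ) : ℝ) ≤ ((min (i + 1 - N) N : ℕ) : ℝ) := Nat.cast_le.mpr b2.1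
      have r2b : ((min (i + 1 - N) N : ℕ) : ℝ) ≤ ((min (i - N) N : ℕ) : ℝ) + 1 := by
        exact_mod_cast b2.2
      have r3a : ((min (i - 2 * N) N : ℕ) : ℝ) ≤ ((min (i + 1 - 2 * N) N : ℕ) : ℝ) :=
        Nat.cast_le.mpr b3.1
      have r3b : ((min (i + 1 - 2 * N) N : ℕ) : ℝ) ≤ ((min (i - 2 * N) N : ℕ) : ℝ) + 1 := by
        exact_mod_cast b3.2
      have p1 : 0 ≤ (((min (i + 1) N : ℕ) : ℝ) - ((min i N : ℕ) : ℝ)) * d1 :=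
        mul_nonneg (by linarith) hd1
      have p2 : 0 ≤ (((min (i + 1 - N) N : ℕ) : ℝ) - ((min (i - N) N : ℕ) : ℝ)) * d2 :=
        mul_nonneg (by linarith) hd2
      have p3 : 0 ≤ (((min (i + 1 - 2 * N) N : ℕ) : ℝ) - ((min (i - 2 * N) N : ℕ) : ℝ)) * d3 :=
        mul_nonneg (by linarith) hd3
      have q1 : (((min (i + 1) N : ℕ) : ℝ) - ((min i N : ℕ) : ℝ)) * d1 ≤ 1 * d1 :=
        mul_le_mul_of_nonneg_right (by linarith) hd1
      have q2 : (((min (i + 1 - N) N : ℕ) : ℝ) - ((min (i - N) N : ℕ) : ℝ)) * d2 ≤ 1 * d2 :=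
        mul_le_mul_of_nonneg_right (by linarith) hd2
      have q3 : (((min (i + 1 - 2 * N) N : ℕ) : ℝ) - ((min (i - 2 * N) N : ℕ) : ℝ)) * d3 ≤ 1 * d3 :=
        mul_le_mul_of_nonneg_right (by linarith) hd3
      constructor
      · rw [e]; linarith
      · rw [e]; linarith [hdsum]
    have hTmono : Monotone T := monotone_nat_of_le_succ (fun i => by linarith [(hstep i).1])
    set τ : ℕ → ℝ := fun i => if i = N ∨ i = 2 * N then T (i + 1) else T i with hτ
    have hτmem : ∀ i, T i ≤ τ i ∧ τ i ≤ T (i + 1) := by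
      intro i
      simp only [hτ]
      split_ifs
      · exact ⟨by linarith [(hstep i).1], le_rfl⟩
      · exact ⟨le_rfl, by linarith [(hstep i).1]⟩
    set q : ℕ → ℝ := fun j => if j = 0 then a else if j ≤ 3 * N then τ (j - 1) else b with hq
    have hq0 : q 0 = a := by simp [hq]
    have hqmid : ∀ j, 1 ≤ j → j ≤ 3 * N → q j = τ (j - 1) := by
      intro j h1 h2
      simp only [hq]
      rw [if_neg (by omega), if_pos h2]
    have hqend : q (3 * N + 1) = b := by
      simp only [hq]
      rw [if_neg (by omega), if_neg (by omega)]
    have hqTb : ∀ j, 1 ≤ j → j ≤ 3 * N → T (j - 1) ≤ q j ∧ q j ≤ T j := by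
      intro j h1 h2
      rw [hqmid j h1 h2]
      have h := hτmem (j - 1)
      have hj : j - 1 + 1 = j := by omega
      rw [hj] at h
      exact h
    have hmono' : ∀ j < 3 * N + 1, q j ≤ q (j + 1) := by
      intro j hj
      by_cases hj0 : j = 0
      · subst hj0
        rw [hq0, hqmid 1 le_rfl (by omega)]
        have := (hτmem 0).1
        simp only [Nat.sub_self] at *
        calc a = T 0 := hT0.symm
        _ ≤ τ 0 := (hτmem 0).1
      · by_cases hj3 : j = 3 * N
        · subst hj3
          rw [hqend]
          have h := (hqTb (3 * N) (by omega) le_rfl).2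
          calc q (3 * N) ≤ T (3 * N) := h
          _ = b := hT3N
        · have h1 := (hqTb j (by omega) (by omega)).2
          have h2 := (hqTb (j + 1) (by omega) (by omega)).1
          simp only [Nat.add_sub_cancel] at h2
          linarith
    have htag' : ∀ j < 3 * N + 1, T j ∈ Set.Icc (q j) (q (j + 1)) := by
      intro j hj
      constructor
      · by_cases hj0 : j = 0
        · subst hj0; rw [hq0, hT0]
        · exact (hqTb j (by omega) (by omega)).2
      · by_cases hj3 : j = 3 * N
        · subst hj3; rw [hqend, hT3N]
        · have h2 := (hqTb (j + 1) (by omega) (by omega)).1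
          simp only [Nat.add_sub_cancel] at h2
          exact h2
    have hδ1 : δ ≤ δ₁ := min_le_left _ _
    have hδ2 : δ ≤ δ₂ := min_le_right _ _
    clear_value T τ q δ d1 d2 d3
    have meshP : ∀ i < 3 * N, T (i + 1) - T i < δ₁ := by
      intro i _
      calc T (i + 1) - T i ≤ (b - a) / N := (hstep i).2
        _ < δ / 2 := hmesh
        _ < δ := by linarith
        _ ≤ δ₁ := hδ1
    have meshP' : ∀ j < 3 * N + 1, q (j + 1) - q j < δ₂ := by
      intro j hj
      by_cases hj0 : j = 0
      · subst hj0
        have e1 : q (0 + 1) = τ 0 := by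
          have := hqmid 1 le_rfl (by omega)
          simpa using this
        rw [e1, hq0]
        have h := (hτmem 0).2
        have h2 := (hstep 0).2
        linarith only [hmesh, hδ, hδ2, h, h2, hT0]
      · by_cases hj3 : j = 3 * N
        · subst hj3
          rw [hqend]
          have h := (hqTb (3 * N) (by omega) le_rfl).1
          have hs := (hstep (3 * N - 1)).2
          have hrw : 3 * N - 1 + 1 = 3 * N := by omega
          rw [hrw] at hs
          have hb := hT3N
          linarith only [hmesh, hδ, hδ2, h, hs, hb]
        · have h1 := (hqTb j (by omega) (by omega)).1
          have h2 := (hqTb (j + 1) (by omega) (by omega)).2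
          have hs1 := (hstep (j - 1)).2
          have hrw : j - 1 + 1 = j := by omega
          rw [hrw] at hs1
          have hs2 := (hstep j).2
          linarith only [hmesh, hδ, hδ2, h1, h2, hs1, hs2]
    have HS := H₁ ⟨3 * N, by omega, T, τ, hT0, hT3N, fun i _ => hTmono (Nat.le_succ i),
      fun i _ => ⟨(hτmem i).1, (hτmem i).2⟩⟩ meshP
    have HF := H₂ ⟨3 * N + 1, by omega, q, T, hq0, hqend, hmono', htag'⟩ meshP'
    simp only [RSSum_mk] at HS HF
    -- the step function
    set g : ℝ → ℝ := fun y =>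
      if y ≤ x then (1 - α) * u a + α * u x
      else if y ≤ M' then (1 - α) * u ((a + b) / 2) + α * u x
      else (1 - α) * u b + α * u x with hgdef
    -- eq1 : decompose the kernel sum
    have eq1 : ∑ i ∈ Finset.range (3 * N),
            (if τ i ≤ x then (1 - α) * (u (τ i) - u a) + α * (u (τ i) - u x)
             else if τ i ≤ M' then (1 - α) * (u (τ i) - u ((a + b) / 2)) + α * (u (τ i) - u x)
             else (1 - α) * (u (τ i) - u b) + α * (u (τ i) - u x))
            * (f (T (i + 1)) - f (T i))
        = (∑ i ∈ Finset.range (3 * N), u (τ i) * (f (T (i + 1)) - f (T i)))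
          - ∑ i ∈ Finset.range (3 * N), g (τ i) * (f (T (i + 1)) - f (T i)) := by
      rw [← Finset.sum_sub_distrib]
      refine Finset.sum_congr rfl (fun i _ => ?_)
      simp only [hgdef]
      split_ifs <;> ring
    -- eq2 : integration by parts telescoping
    have eq2 : (∑ i ∈ Finset.range (3 * N), u (τ i) * (f (T (i + 1)) - f (T i)))
        + (∑ j ∈ Finset.range (3 * N + 1), f (T j) * (u (q (j + 1)) - u (q j)))
        = u b * f b - u a * f a := by
      have h := rs_tele (3 * N) (fun i => f (T i)) (fun j => u (q j)) (fun i => u (τ i))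
        (fun j h1 h2 => by show u (q j) = u (τ (j - 1)); rw [hqmid j h1 h2])
      simpa [hqend, hq0, hT3N, hT0] using h
    -- eq3 : step function sum
    have B1 : ∀ i, 0 ≤ i → i < N →
        g (τ i) * (f (T (i + 1)) - f (T i))
          = ((1 - α) * u a + α * u x) * (f (T (i + 1)) - f (T i)) := by
      intro i _ hi
      have hτi : τ i = T i := by
        simp only [hτ]; rw [if_neg (by omega)]
      have hle : T i ≤ x := by
        rw [hTlow i hi.le]
        have : (i : ℝ) * d1 ≤ (N : ℝ) * d1 :=
          mul_le_mul_of_nonneg_right (Nat.cast_le.mpr hi.le) hd1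
        linarith [hNd1]
      rw [hτi]
      simp only [hgdef]
      rw [if_pos hle]
    have B2 : ∀ i, N ≤ i → i < 2 * N →
        g (τ i) * (f (T (i + 1)) - f (T i))
          = ((1 - α) * u ((a + b) / 2) + α * u x) * (f (T (i + 1)) - f (T i)) := by
      intro i h1 h2
      by_cases hdeg : x = M'
      · have hd2z : d2 = 0 := by rw [hd2def, ← hdeg]; simp
        have hTi : T i = x := by
          rw [hTmid i h1 (by omega), hd2z]; ring
        have hTi1 : T (i + 1) = x := by
          rw [hTmid (i + 1) (by omega) (by omega), hd2z]; ring
        rw [hTi, hTi1, sub_self, mul_zero, mul_zero]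
      · have hxlt : x < M' := lt_of_le_of_ne hxM' hdeg
        have hd2pos : 0 < d2 := by rw [hd2def]; exact div_pos (by linarith) hNR
        have hub : τ i ≤ M' := by
          calc τ i ≤ T (i + 1) := (hτmem i).2
          _ ≤ T (2 * N) := hTmono (by omega)
          _ = M' := hT2N
        have hlb : x < τ i := by
          by_cases hiN : i = N
          · have : τ i = T (i + 1) := by
              simp only [hτ]; rw [if_pos (Or.inl hiN)]
            rw [this, hiN, hTmid (N + 1) (by omega) (by omega)]
            have : (N + 1 - N : ℕ) = 1 := by omega
            rw [this]
            push_cast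
            linarith
          · have hτi : τ i = T i := by
              simp only [hτ]; rw [if_neg (by omega)]
            rw [hτi, hTmid i h1 (by omega)]
            have hc : (1 : ℝ) ≤ ((i - N : ℕ) : ℝ) := by
              have : 1 ≤ i - N := by omega
              exact_mod_cast this
            nlinarith
        simp only [hgdef]
        rw [if_neg (not_le.mpr hlb), if_pos hub]
    have B3 : ∀ i, 2 * N ≤ i → i < 3 * N →
        g (τ i) * (f (T (i + 1)) - f (T i))
          = ((1 - α) * u b + α * u x) * (f (T (i + 1)) - f (T i)) := by
      intro i h1 h2
      by_cases hdeg : M' = b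
      · have hd3z : d3 = 0 := by rw [hd3def, hdeg]; simp
        have hTi : T i = M' := by
          rw [hThigh i h1 (by omega), hd3z]; ring
        have hTi1 : T (i + 1) = M' := by
          rw [hThigh (i + 1) (by omega) (by omega), hd3z]; ring
        rw [hTi, hTi1, sub_self, mul_zero, mul_zero]
      · have hlt : M' < b := lt_of_le_of_ne hM'b hdeg
        have hd3pos : 0 < d3 := by rw [hd3def]; exact div_pos (by linarith) hNR
        have hlb : M' < τ i := by
          by_cases hi2N : i = 2 * N
          · have : τ i = T (i + 1) := by
              simp only [hτ]; rw [if_pos (Or.inr hi2N)]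
            rw [this, hi2N, hThigh (2 * N + 1) (by omega) (by omega)]
            have : (2 * N + 1 - 2 * N : ℕ) = 1 := by omega
            rw [this]
            push_cast
            linarith
          · have hτi : τ i = T i := by
              simp only [hτ]; rw [if_neg (by omega)]
            rw [hτi, hThigh i h1 (by omega)]
            have hc : (1 : ℝ) ≤ ((i - 2 * N : ℕ) : ℝ) := by
              have : 1 ≤ i - 2 * N := by omega
              exact_mod_cast this
            nlinarith
        simp only [hgdef]
        rw [if_neg (by push_neg; linarith), if_neg (not_le.mpr hlb)]
    have e1 : ∑ i ∈ Finset.Ico 0 N, g (τ i) * (f (T (i + 1)) - f (T i))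
        = ((1 - α) * u a + α * u x) * (f (T N) - f (T 0)) :=
      rs_block 0 N _ (fun i => g (τ i)) (fun i => f (T i)) (Nat.zero_le N) B1
    have e2 : ∑ i ∈ Finset.Ico N (2 * N), g (τ i) * (f (T (i + 1)) - f (T i))
        = ((1 - α) * u ((a + b) / 2) + α * u x) * (f (T (2 * N)) - f (T N)) :=
      rs_block N (2 * N) _ (fun i => g (τ i)) (fun i => f (T i)) (by omega) B2
    have e3 : ∑ i ∈ Finset.Ico (2 * N) (3 * N), g (τ i) * (f (T (i + 1)) - f (T i))
        = ((1 - α) * u b + α * u x) * (f (T (3 * N)) - f (T (2 * N))) :=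
      rs_block (2 * N) (3 * N) _ (fun i => g (τ i)) (fun i => f (T i)) (by omega) B3
    have eq3 : ∑ i ∈ Finset.range (3 * N), g (τ i) * (f (T (i + 1)) - f (T i))
        = ((1 - α) * u a + α * u x) * (f x - f a)
          + ((1 - α) * u ((a + b) / 2) + α * u x) * (f M' - f x)
          + ((1 - α) * u b + α * u x) * (f b - f M') := by
      rw [Finset.range_eq_Ico,
        ← Finset.sum_Ico_consecutive _ (Nat.zero_le N) (show N ≤ 3 * N by omega),
        ← Finset.sum_Ico_consecutive _ (show N ≤ 2 * N by omega) (show 2 * N ≤ 3 * N by omega),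
        e1, e2, e3, hT0, hTN, hT2N, hT3N]
      ring
    have hPhi : Phi f u α a b x
        = (1 - α) * ((u ((a + b) / 2) - u a) * f x + (u b - u ((a + b) / 2)) * f M')
          + α * ((u x - u a) * f a + (u b - u x) * f b) := by
      simp only [Phi, hM'def]
    set S1 : ℝ := ∑ i ∈ Finset.range (3 * N),
            (if τ i ≤ x then (1 - α) * (u (τ i) - u a) + α * (u (τ i) - u x)
             else if τ i ≤ M' then (1 - α) * (u (τ i) - u ((a + b) / 2)) + α * (u (τ i) - u x)
             else (1 - α) * (u (τ i) - u b) + α * (u (τ i) - u x))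
            * (f (T (i + 1)) - f (T i)) with hS1def
    set S2 : ℝ := ∑ j ∈ Finset.range (3 * N + 1), f (T j) * (u (q (j + 1)) - u (q j))
      with hS2def
    have identity : S1 + S2 = Phi f u α a b x := by
      rw [eq1, hPhi]
      linear_combination eq2 - eq3
    have habs : J₁ - (Phi f u α a b x - J₂) = (J₁ - S1) + (J₂ - S2) := by
      rw [← identity]; ring
    rw [habs]
    have hHS : |J₁ - S1| < ε / 2 := by rw [abs_sub_comm]; exact HS
    have hHF : |J₂ - S2| < ε / 2 := by rw [abs_sub_comm]; exact HF
    calc |(J₁ - S1) + (J₂ - S2)| ≤ |J₁ - S1| + |J₂ - S2| := abs_add_le _ _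
      _ < ε := by linarith
  have h0 : |J₁ - (Phi f u α a b x - J₂)| = 0 := by
    by_contra hne
    have hpos : 0 < |J₁ - (Phi f u α a b x - J₂)| :=
      (abs_nonneg _).lt_of_ne (Ne.symm hne)
    exact absurd (key _ hpos) (lt_irrefl _)
  have := abs_eq_zero.mp h0
  linarith
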